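/- Koszul complex property: K₁^{r+2} ∘ K₂ʳ = 0 on Sym(3)-valued fields with homogeneous polynomial entries of degree r, and K₂^{r+1} ∘ K₃ʳ = 0 on vector fields with homogeneous polynomial entries of degree r, for all r ≥ 0. -/

import Mathlib

open MeasureTheory

noncomputable section

abbrev V3 : Type := Fin 3 → ℝ
abbrev M33 : Type := Fin 3 → Fin 3 → ℝ

/-- Levi-Civita symbol on `Fin 3`. -/
def lc (i j k : Fin 3) : ℝ :=
  (((i : ℕ) : ℝ) - ((j : ℕ) : ℝ)) * (((j : ℕ) : ℝ) - ((k : ℕ) : ℝ)) *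
    (((k : ℕ) : ℝ) - ((i : ℕ) : ℝ)) / 2

/-- Partial derivative in the `i`-th coordinate direction. -/
def pd (i : Fin 3) (f : V3 → ℝ) (x : V3) : ℝ :=
  fderiv ℝ f x (Pi.single i 1)

/-- Cross product of vectors in `ℝ³`. -/
def cross (u v : V3) : V3 := fun i => ∑ a, ∑ b, lc i a b * u a * v b

/-- Outer (tensor) product `u ⊗ v`. -/
def outer (u v : V3) : M33 := fun i j => u i * v j

/-- Matrix-vector product `A · v`. -/
def mulVec3 (A : M33) (v : V3) : V3 := fun i => ∑ j, A i j * v j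

/-- Column-wise cross product `u ∧ A`. -/
def colCross (u : V3) (A : M33) : M33 := fun i j => ∑ a, ∑ b, lc i a b * u a * A b j

/-- Row-wise cross product `A ∧ u`. -/
def rowCross (A : M33) (u : V3) : M33 := fun i j => ∑ a, ∑ b, lc j a b * A i a * u b

/-- Symmetric part of a matrix. -/
def symm3 (A : M33) : M33 := fun i j => (A i j + A j i) / 2

/-- Column-wise curl `∇ × F` of a matrix field: `(∇×F)_{ij} = ε_{iab} ∂_a F_{bj}`. -/
def colCurl (F : V3 → M33) (x : V3) : M33 :=
  fun i j => ∑ a, ∑ b, lc i a b * pd a (fun y => F y b j) x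

/-- Row-wise curl `F × ∇` of a matrix field: `(F×∇)_{ij} = ε_{jab} ∂_a F_{ib}`. -/
def rowCurl (F : V3 → M33) (x : V3) : M33 :=
  fun i j => ∑ a, ∑ b, lc j a b * pd a (fun y => F y i b) x

/-- Row-wise divergence of a matrix field: `(div F)_i = ∂_j F_{ij}`. -/
def divM (F : V3 → M33) (x : V3) : V3 := fun i => ∑ j, pd j (fun y => F y i j) x

/-- Divergence of a vector field. -/
def divV (u : V3 → V3) (x : V3) : ℝ := ∑ j, pd j (fun y => u y j) x

/-- Symmetric gradient (linearized strain) `def u`. -/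
def defo (u : V3 → V3) (x : V3) : M33 :=
  fun i j => (pd i (fun y => u y j) x + pd j (fun y => u y i) x) / 2

/-- Incompatibility operator `inc E = ∇ × E × ∇`:
`(inc E)_{ij} = ε_{ist} ε_{jlm} ∂_s ∂_l E_{tm}`. -/
def inc3 (F : V3 → M33) (x : V3) : M33 :=
  fun i j => ∑ s, ∑ t, ∑ l, ∑ m,
    lc i s t * lc j l m * pd s (fun y => pd l (fun z => F z t m) y) x

/-- The vector `w` associated with the skew-symmetric matrix `Skw w`. -/
def vecOf (A : M33) : V3 := ![A 2 1, A 0 2, A 1 0]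

/-- Smoothness of a matrix field, componentwise. -/
def SmoothM (F : V3 → M33) : Prop := ∀ i j, ContDiff ℝ (⊤ : ℕ∞) fun x => F x i j

/-- Smoothness of a vector field, componentwise. -/
def SmoothV (u : V3 → V3) : Prop := ∀ i, ContDiff ℝ (⊤ : ℕ∞) fun x => u x i

/-- Pointwise symmetry of a matrix field. -/
def SymM (F : V3 → M33) : Prop := ∀ x i j, F x i j = F x j i

/-- A scalar field is (entrywise) a homogeneous polynomial of degree `r`:
it is smooth and homogeneous of degree `r`. -/
def HomPoly (r : ℕ) (f : V3 → ℝ) : Prop :=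
  ContDiff ℝ (⊤ : ℕ∞) f ∧ ∀ (t : ℝ) (x : V3), f (t • x) = t ^ r * f x

/-- The first Koszul operator `K₁ˢ E = (1/(s+1)) E·x + (1/((s+1)(s+2))) x ∧ (∇×E) · x`. -/
def K1 (s : ℝ) (E : V3 → M33) (x : V3) : V3 := fun i =>
  (1 / (s + 1)) * mulVec3 (E x) x i +
    (1 / ((s + 1) * (s + 2))) * mulVec3 (colCross x (colCurl E x)) x i

/-- The second Koszul operator `K₂ˢ V = (1/((s+2)(s+3))) x ∧ V ∧ x`. -/
def K2 (s : ℝ) (Vf : V3 → M33) (x : V3) : M33 :=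
  (1 / ((s + 2) * (s + 3))) • colCross x (rowCross (Vf x) x)

/-- The third Koszul operator
`K₃ˢ v = (1/(s+3)) sym(x⊗v) − (1/((s+3)(s+4))) sym((x ⊗ (v × x)) × ∇)`. -/
def K3 (s : ℝ) (v : V3 → V3) (x : V3) : M33 :=
  (1 / (s + 3)) • symm3 (outer x (v x)) -
    (1 / ((s + 3) * (s + 4))) • symm3 (rowCurl (fun p => outer p (cross (v p) p)) x)


section Aux


theorem pd_add' {x : V3} {i : Fin 3} {f g : V3 → ℝ} (hf : DifferentiableAt ℝ f x)
    (hg : DifferentiableAt ℝ g x) :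
    pd i (fun y => f y + g y) x = pd i f x + pd i g x := by
  simp [pd, fderiv_fun_add hf hg]

theorem pd_neg' {x : V3} {i : Fin 3} {f : V3 → ℝ} :
    pd i (fun y => -f y) x = -pd i f x := by
  simp [pd, fderiv_neg]

theorem pd_sub' {x : V3} {i : Fin 3} {f g : V3 → ℝ} (hf : DifferentiableAt ℝ f x)
    (hg : DifferentiableAt ℝ g x) :
    pd i (fun y => f y - g y) x = pd i f x - pd i g x := by
  simp [pd, fderiv_fun_sub hf hg]

theorem pd_mul' {x : V3} {i : Fin 3} {f g : V3 → ℝ} (hf : DifferentiableAt ℝ f x)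
    (hg : DifferentiableAt ℝ g x) :
    pd i (fun y => f y * g y) x = pd i f x * g x + f x * pd i g x := by
  simp [pd, fderiv_fun_mul hf hg]; ring

theorem pd_const' {x : V3} {i : Fin 3} (c : ℝ) : pd i (fun _ => c) x = 0 := by
  simp [pd]

theorem pd_coord' {x : V3} {i p : Fin 3} : pd i (fun y => y p) x = if p = i then 1 else 0 := by
  have h : fderiv ℝ (fun y : V3 => y p) x = ContinuousLinearMap.proj p :=
    (ContinuousLinearMap.proj p : V3 →L[ℝ] ℝ).hasFDerivAt.fderiv
  simp [pd, h, Pi.single_apply]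

-- lc value lemmas
theorem lc000 : lc 0 0 0 = 0 := by norm_num [lc]
theorem lc001 : lc 0 0 1 = 0 := by norm_num [lc]
theorem lc002 : lc 0 0 2 = 0 := by norm_num [lc]
theorem lc010 : lc 0 1 0 = 0 := by norm_num [lc]
theorem lc011 : lc 0 1 1 = 0 := by norm_num [lc]
theorem lc012 : lc 0 1 2 = 1 := by norm_num [lc]
theorem lc020 : lc 0 2 0 = 0 := by norm_num [lc]
theorem lc021 : lc 0 2 1 = (-1) := by norm_num [lc]
theorem lc022 : lc 0 2 2 = 0 := by norm_num [lc]
theorem lc100 : lc 1 0 0 = 0 := by norm_num [lc]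
theorem lc101 : lc 1 0 1 = 0 := by norm_num [lc]
theorem lc102 : lc 1 0 2 = (-1) := by norm_num [lc]
theorem lc110 : lc 1 1 0 = 0 := by norm_num [lc]
theorem lc111 : lc 1 1 1 = 0 := by norm_num [lc]
theorem lc112 : lc 1 1 2 = 0 := by norm_num [lc]
theorem lc120 : lc 1 2 0 = 1 := by norm_num [lc]
theorem lc121 : lc 1 2 1 = 0 := by norm_num [lc]
theorem lc122 : lc 1 2 2 = 0 := by norm_num [lc]
theorem lc200 : lc 2 0 0 = 0 := by norm_num [lc]
theorem lc201 : lc 2 0 1 = 1 := by norm_num [lc]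
theorem lc202 : lc 2 0 2 = 0 := by norm_num [lc]
theorem lc210 : lc 2 1 0 = (-1) := by norm_num [lc]
theorem lc211 : lc 2 1 1 = 0 := by norm_num [lc]
theorem lc212 : lc 2 1 2 = 0 := by norm_num [lc]
theorem lc220 : lc 2 2 0 = 0 := by norm_num [lc]
theorem lc221 : lc 2 2 1 = 0 := by norm_num [lc]
theorem lc222 : lc 2 2 2 = 0 := by norm_num [lc]
-- lc000, lc001, lc002, lc010, lc011, lc012, lc020, lc021, lc022, lc100, lc101, lc102, lc110, lc111, lc112, lc120, lc121, lc122, lc200, lc201, lc202, lc210, lc211, lc212, lc220, lc221, lc222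

set_option maxHeartbeats 1000000

theorem hA_0 (t : ℝ) (Vf : V3 → M33) (x : V3) : mulVec3 (K2 t Vf x) x 0 = 0 := by
  simp only [K2, mulVec3, colCross, rowCross, Fin.sum_univ_three, Pi.smul_apply, Pi.sub_apply, smul_eq_mul, lc000, lc001, lc002, lc010, lc011, lc012, lc020, lc021, lc022, lc100, lc101, lc102, lc110, lc111, lc112, lc120, lc121, lc122, lc200, lc201, lc202, lc210, lc211, lc212, lc220, lc221, lc222, zero_mul, mul_zero, zero_add, add_zero, one_mul, mul_one, neg_mul, mul_neg, neg_neg]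
  ring

theorem hA_1 (t : ℝ) (Vf : V3 → M33) (x : V3) : mulVec3 (K2 t Vf x) x 1 = 0 := by
  simp only [K2, mulVec3, colCross, rowCross, Fin.sum_univ_three, Pi.smul_apply, Pi.sub_apply, smul_eq_mul, lc000, lc001, lc002, lc010, lc011, lc012, lc020, lc021, lc022, lc100, lc101, lc102, lc110, lc111, lc112, lc120, lc121, lc122, lc200, lc201, lc202, lc210, lc211, lc212, lc220, lc221, lc222, zero_mul, mul_zero, zero_add, add_zero, one_mul, mul_one, neg_mul, mul_neg, neg_neg]
  ring

theorem hA_2 (t : ℝ) (Vf : V3 → M33) (x : V3) : mulVec3 (K2 t Vf x) x 2 = 0 := by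
  simp only [K2, mulVec3, colCross, rowCross, Fin.sum_univ_three, Pi.smul_apply, Pi.sub_apply, smul_eq_mul, lc000, lc001, lc002, lc010, lc011, lc012, lc020, lc021, lc022, lc100, lc101, lc102, lc110, lc111, lc112, lc120, lc121, lc122, lc200, lc201, lc202, lc210, lc211, lc212, lc220, lc221, lc222, zero_mul, mul_zero, zero_add, add_zero, one_mul, mul_one, neg_mul, mul_neg, neg_neg]
  ring

theorem hB_0 (t : ℝ) (Vf : V3 → M33) (hV : ∀ i j, Differentiable ℝ fun y => Vf y i j)
    (x : V3) : mulVec3 (colCross x (colCurl (K2 t Vf) x)) x 0 = 0 := by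
  simp only [K2, colCurl, mulVec3, colCross, rowCross, Fin.sum_univ_three, Pi.smul_apply, Pi.sub_apply, smul_eq_mul, lc000, lc001, lc002, lc010, lc011, lc012, lc020, lc021, lc022, lc100, lc101, lc102, lc110, lc111, lc112, lc120, lc121, lc122, lc200, lc201, lc202, lc210, lc211, lc212, lc220, lc221, lc222, zero_mul, mul_zero, zero_add, add_zero, one_mul, mul_one, neg_mul, mul_neg, neg_neg]
  simp (disch := fun_prop) only [pd_add', pd_sub', pd_neg', pd_mul', pd_const', pd_coord']
  simp only [Fin.reduceEq, reduceIte]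
  ring

theorem hB_1 (t : ℝ) (Vf : V3 → M33) (hV : ∀ i j, Differentiable ℝ fun y => Vf y i j)
    (x : V3) : mulVec3 (colCross x (colCurl (K2 t Vf) x)) x 1 = 0 := by
  simp only [K2, colCurl, mulVec3, colCross, rowCross, Fin.sum_univ_three, Pi.smul_apply, Pi.sub_apply, smul_eq_mul, lc000, lc001, lc002, lc010, lc011, lc012, lc020, lc021, lc022, lc100, lc101, lc102, lc110, lc111, lc112, lc120, lc121, lc122, lc200, lc201, lc202, lc210, lc211, lc212, lc220, lc221, lc222, zero_mul, mul_zero, zero_add, add_zero, one_mul, mul_one, neg_mul, mul_neg, neg_neg]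
  simp (disch := fun_prop) only [pd_add', pd_sub', pd_neg', pd_mul', pd_const', pd_coord']
  simp only [Fin.reduceEq, reduceIte]
  ring

theorem hB_2 (t : ℝ) (Vf : V3 → M33) (hV : ∀ i j, Differentiable ℝ fun y => Vf y i j)
    (x : V3) : mulVec3 (colCross x (colCurl (K2 t Vf) x)) x 2 = 0 := by
  simp only [K2, colCurl, mulVec3, colCross, rowCross, Fin.sum_univ_three, Pi.smul_apply, Pi.sub_apply, smul_eq_mul, lc000, lc001, lc002, lc010, lc011, lc012, lc020, lc021, lc022, lc100, lc101, lc102, lc110, lc111, lc112, lc120, lc121, lc122, lc200, lc201, lc202, lc210, lc211, lc212, lc220, lc221, lc222, zero_mul, mul_zero, zero_add, add_zero, one_mul, mul_one, neg_mul, mul_neg, neg_neg]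
  simp (disch := fun_prop) only [pd_add', pd_sub', pd_neg', pd_mul', pd_const', pd_coord']
  simp only [Fin.reduceEq, reduceIte]
  ring

theorem hK1_0 (s t : ℝ) (Vf : V3 → M33) (hV : ∀ i j, Differentiable ℝ fun y => Vf y i j)
    (x : V3) : K1 s (K2 t Vf) x 0 = 0 := by
  simp only [K1, hA_0 t Vf x, hB_0 t Vf hV x]
  ring

theorem hK1_1 (s t : ℝ) (Vf : V3 → M33) (hV : ∀ i j, Differentiable ℝ fun y => Vf y i j)
    (x : V3) : K1 s (K2 t Vf) x 1 = 0 := by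
  simp only [K1, hA_1 t Vf x, hB_1 t Vf hV x]
  ring

theorem hK1_2 (s t : ℝ) (Vf : V3 → M33) (hV : ∀ i j, Differentiable ℝ fun y => Vf y i j)
    (x : V3) : K1 s (K2 t Vf) x 2 = 0 := by
  simp only [K1, hA_2 t Vf x, hB_2 t Vf hV x]
  ring

theorem hC_00 (s t : ℝ) (v : V3 → V3) (hv : ∀ i, Differentiable ℝ fun y => v y i)
    (x : V3) : K2 s (K3 t v) x 0 0 = 0 := by
  have h : colCross x (rowCross (K3 t v x) x) 0 0 = 0 := by
    simp only [K3, colCross, rowCross, symm3, outer, cross, rowCurl, Fin.sum_univ_three, Pi.smul_apply, Pi.sub_apply, smul_eq_mul, lc000, lc001, lc002, lc010, lc011, lc012, lc020, lc021, lc022, lc100, lc101, lc102, lc110, lc111, lc112, lc120, lc121, lc122, lc200, lc201, lc202, lc210, lc211, lc212, lc220, lc221, lc222, zero_mul, mul_zero, zero_add, add_zero, one_mul, mul_one, neg_mul, mul_neg, neg_neg]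
    simp (disch := fun_prop) only [pd_add', pd_sub', pd_neg', pd_mul', pd_const', pd_coord']
    simp only [Fin.reduceEq, reduceIte]
    ring
  simp only [K2, Pi.smul_apply, smul_eq_mul, h, mul_zero]

theorem hC_01 (s t : ℝ) (v : V3 → V3) (hv : ∀ i, Differentiable ℝ fun y => v y i)
    (x : V3) : K2 s (K3 t v) x 0 1 = 0 := by
  have h : colCross x (rowCross (K3 t v x) x) 0 1 = 0 := by
    simp only [K3, colCross, rowCross, symm3, outer, cross, rowCurl, Fin.sum_univ_three, Pi.smul_apply, Pi.sub_apply, smul_eq_mul, lc000, lc001, lc002, lc010, lc011, lc012, lc020, lc021, lc022, lc100, lc101, lc102, lc110, lc111, lc112, lc120, lc121, lc122, lc200, lc201, lc202, lc210, lc211, lc212, lc220, lc221, lc222, zero_mul, mul_zero, zero_add, add_zero, one_mul, mul_one, neg_mul, mul_neg, neg_neg]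
    simp (disch := fun_prop) only [pd_add', pd_sub', pd_neg', pd_mul', pd_const', pd_coord']
    simp only [Fin.reduceEq, reduceIte]
    ring
  simp only [K2, Pi.smul_apply, smul_eq_mul, h, mul_zero]

theorem hC_02 (s t : ℝ) (v : V3 → V3) (hv : ∀ i, Differentiable ℝ fun y => v y i)
    (x : V3) : K2 s (K3 t v) x 0 2 = 0 := by
  have h : colCross x (rowCross (K3 t v x) x) 0 2 = 0 := by
    simp only [K3, colCross, rowCross, symm3, outer, cross, rowCurl, Fin.sum_univ_three, Pi.smul_apply, Pi.sub_apply, smul_eq_mul, lc000, lc001, lc002, lc010, lc011, lc012, lc020, lc021, lc022, lc100, lc101, lc102, lc110, lc111, lc112, lc120, lc121, lc122, lc200, lc201, lc202, lc210, lc211, lc212, lc220, lc221, lc222, zero_mul, mul_zero, zero_add, add_zero, one_mul, mul_one, neg_mul, mul_neg, neg_neg]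
    simp (disch := fun_prop) only [pd_add', pd_sub', pd_neg', pd_mul', pd_const', pd_coord']
    simp only [Fin.reduceEq, reduceIte]
    ring
  simp only [K2, Pi.smul_apply, smul_eq_mul, h, mul_zero]

theorem hC_10 (s t : ℝ) (v : V3 → V3) (hv : ∀ i, Differentiable ℝ fun y => v y i)
    (x : V3) : K2 s (K3 t v) x 1 0 = 0 := by
  have h : colCross x (rowCross (K3 t v x) x) 1 0 = 0 := by
    simp only [K3, colCross, rowCross, symm3, outer, cross, rowCurl, Fin.sum_univ_three, Pi.smul_apply, Pi.sub_apply, smul_eq_mul, lc000, lc001, lc002, lc010, lc011, lc012, lc020, lc021, lc022, lc100, lc101, lc102, lc110, lc111, lc112, lc120, lc121, lc122, lc200, lc201, lc202, lc210, lc211, lc212, lc220, lc221, lc222, zero_mul, mul_zero, zero_add, add_zero, one_mul, mul_one, neg_mul, mul_neg, neg_neg]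
    simp (disch := fun_prop) only [pd_add', pd_sub', pd_neg', pd_mul', pd_const', pd_coord']
    simp only [Fin.reduceEq, reduceIte]
    ring
  simp only [K2, Pi.smul_apply, smul_eq_mul, h, mul_zero]

theorem hC_11 (s t : ℝ) (v : V3 → V3) (hv : ∀ i, Differentiable ℝ fun y => v y i)
    (x : V3) : K2 s (K3 t v) x 1 1 = 0 := by
  have h : colCross x (rowCross (K3 t v x) x) 1 1 = 0 := by
    simp only [K3, colCross, rowCross, symm3, outer, cross, rowCurl, Fin.sum_univ_three, Pi.smul_apply, Pi.sub_apply, smul_eq_mul, lc000, lc001, lc002, lc010, lc011, lc012, lc020, lc021, lc022, lc100, lc101, lc102, lc110, lc111, lc112, lc120, lc121, lc122, lc200, lc201, lc202, lc210, lc211, lc212, lc220, lc221, lc222, zero_mul, mul_zero, zero_add, add_zero, one_mul, mul_one, neg_mul, mul_neg, neg_neg]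
    simp (disch := fun_prop) only [pd_add', pd_sub', pd_neg', pd_mul', pd_const', pd_coord']
    simp only [Fin.reduceEq, reduceIte]
    ring
  simp only [K2, Pi.smul_apply, smul_eq_mul, h, mul_zero]

theorem hC_12 (s t : ℝ) (v : V3 → V3) (hv : ∀ i, Differentiable ℝ fun y => v y i)
    (x : V3) : K2 s (K3 t v) x 1 2 = 0 := by
  have h : colCross x (rowCross (K3 t v x) x) 1 2 = 0 := by
    simp only [K3, colCross, rowCross, symm3, outer, cross, rowCurl, Fin.sum_univ_three, Pi.smul_apply, Pi.sub_apply, smul_eq_mul, lc000, lc001, lc002, lc010, lc011, lc012, lc020, lc021, lc022, lc100, lc101, lc102, lc110, lc111, lc112, lc120, lc121, lc122, lc200, lc201, lc202, lc210, lc211, lc212, lc220, lc221, lc222, zero_mul, mul_zero, zero_add, add_zero, one_mul, mul_one, neg_mul, mul_neg, neg_neg]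
    simp (disch := fun_prop) only [pd_add', pd_sub', pd_neg', pd_mul', pd_const', pd_coord']
    simp only [Fin.reduceEq, reduceIte]
    ring
  simp only [K2, Pi.smul_apply, smul_eq_mul, h, mul_zero]

theorem hC_20 (s t : ℝ) (v : V3 → V3) (hv : ∀ i, Differentiable ℝ fun y => v y i)
    (x : V3) : K2 s (K3 t v) x 2 0 = 0 := by
  have h : colCross x (rowCross (K3 t v x) x) 2 0 = 0 := by
    simp only [K3, colCross, rowCross, symm3, outer, cross, rowCurl, Fin.sum_univ_three, Pi.smul_apply, Pi.sub_apply, smul_eq_mul, lc000, lc001, lc002, lc010, lc011, lc012, lc020, lc021, lc022, lc100, lc101, lc102, lc110, lc111, lc112, lc120, lc121, lc122, lc200, lc201, lc202, lc210, lc211, lc212, lc220, lc221, lc222, zero_mul, mul_zero, zero_add, add_zero, one_mul, mul_one, neg_mul, mul_neg, neg_neg]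
    simp (disch := fun_prop) only [pd_add', pd_sub', pd_neg', pd_mul', pd_const', pd_coord']
    simp only [Fin.reduceEq, reduceIte]
    ring
  simp only [K2, Pi.smul_apply, smul_eq_mul, h, mul_zero]

theorem hC_21 (s t : ℝ) (v : V3 → V3) (hv : ∀ i, Differentiable ℝ fun y => v y i)
    (x : V3) : K2 s (K3 t v) x 2 1 = 0 := by
  have h : colCross x (rowCross (K3 t v x) x) 2 1 = 0 := by
    simp only [K3, colCross, rowCross, symm3, outer, cross, rowCurl, Fin.sum_univ_three, Pi.smul_apply, Pi.sub_apply, smul_eq_mul, lc000, lc001, lc002, lc010, lc011, lc012, lc020, lc021, lc022, lc100, lc101, lc102, lc110, lc111, lc112, lc120, lc121, lc122, lc200, lc201, lc202, lc210, lc211, lc212, lc220, lc221, lc222, zero_mul, mul_zero, zero_add, add_zero, one_mul, mul_one, neg_mul, mul_neg, neg_neg]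
    simp (disch := fun_prop) only [pd_add', pd_sub', pd_neg', pd_mul', pd_const', pd_coord']
    simp only [Fin.reduceEq, reduceIte]
    ring
  simp only [K2, Pi.smul_apply, smul_eq_mul, h, mul_zero]

theorem hC_22 (s t : ℝ) (v : V3 → V3) (hv : ∀ i, Differentiable ℝ fun y => v y i)
    (x : V3) : K2 s (K3 t v) x 2 2 = 0 := by
  have h : colCross x (rowCross (K3 t v x) x) 2 2 = 0 := by
    simp only [K3, colCross, rowCross, symm3, outer, cross, rowCurl, Fin.sum_univ_three, Pi.smul_apply, Pi.sub_apply, smul_eq_mul, lc000, lc001, lc002, lc010, lc011, lc012, lc020, lc021, lc022, lc100, lc101, lc102, lc110, lc111, lc112, lc120, lc121, lc122, lc200, lc201, lc202, lc210, lc211, lc212, lc220, lc221, lc222, zero_mul, mul_zero, zero_add, add_zero, one_mul, mul_one, neg_mul, mul_neg, neg_neg]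
    simp (disch := fun_prop) only [pd_add', pd_sub', pd_neg', pd_mul', pd_const', pd_coord']
    simp only [Fin.reduceEq, reduceIte]
    ring
  simp only [K2, Pi.smul_apply, smul_eq_mul, h, mul_zero]

theorem koszul12 (s t : ℝ) (Vf : V3 → M33) (hV : ∀ i j, Differentiable ℝ fun y => Vf y i j)
    (x : V3) : K1 s (K2 t Vf) x = 0 := by
  funext i
  fin_cases i
  exacts [hK1_0 s t Vf hV x, hK1_1 s t Vf hV x, hK1_2 s t Vf hV x]

theorem koszul23 (s t : ℝ) (v : V3 → V3) (hv : ∀ i, Differentiable ℝ fun y => v y i)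
    (x : V3) : K2 s (K3 t v) x = 0 := by
  funext i j
  fin_cases i <;> fin_cases j
  exacts [hC_00 s t v hv x, hC_01 s t v hv x, hC_02 s t v hv x,
    hC_10 s t v hv x, hC_11 s t v hv x, hC_12 s t v hv x,
    hC_20 s t v hv x, hC_21 s t v hv x, hC_22 s t v hv x]

end Aux

theorem stmt13 (r : ℕ) :
    (∀ Vf : V3 → M33, SymM Vf → (∀ i j, HomPoly r fun x => Vf x i j) →
      ∀ x, K1 ((r : ℝ) + 2) (K2 (r : ℝ) Vf) x = 0)
    ∧ (∀ v : V3 → V3, (∀ i, HomPoly r fun x => v x i) →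
      ∀ x, K2 ((r : ℝ) + 1) (K3 (r : ℝ) v) x = 0) := by
  constructor
  · intro Vf _ hhp x
    exact koszul12 _ _ Vf (fun i j => ((hhp i j).1).differentiable (by simp)) x
  · intro v hhp x
    exact koszul23 _ _ v (fun i => ((hhp i).1).differentiable (by simp)) x
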